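/- arXiv:2108.12477 — 7 statements merged into one kernel-verified Lean document; each statement's English description precedes it below -/
import Mathlib

section
/- For the matrix A_k (tridiagonal with (1,2) and (2,1) entries equal to a = 1/√d and all other off-diagonal entries b = √(d-1)/d) and the vector w with w_ℓ = sqrt(2/(k+1))·sin((ℓ+1)kπ/(k+1)), we have w^T A_k w = 2(a-b)·w_0·w_1 + 2b·cos(kπ/(k+1)). -/
open Real Matrix
open Finset

lemma cos_sum_eval (k : ℕ) (hk : 2 ≤ k) :
    ∑ i ∈ range (k-1), Real.cos ((2*(i:ℝ)+3) * ((k:ℝ)*π/(k+1))) =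
      -2 * Real.cos ((k:ℝ)*π/(k+1)) := by
  set θ : ℝ := (k:ℝ)*π/(k+1) with hθ
  have hk1 : (0:ℝ) < (k:ℝ)+1 := by positivity
  have hθpos : 0 < θ := by
    apply div_pos _ hk1
    have : (0:ℝ) < (k:ℝ) := by exact_mod_cast (by omega : 0 < k)
    positivity
  have hθlt : θ < π := by
    rw [hθ, div_lt_iff₀ hk1]
    have : (0:ℝ) < π := Real.pi_pos
    nlinarith [Real.pi_pos]
  have hs : Real.sin θ ≠ 0 := ne_of_gt (Real.sin_pos_of_pos_of_lt_pi hθpos hθlt)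
  have h2s : (2 * Real.sin θ) ≠ 0 := by positivity
  apply mul_left_cancel₀ h2s
  rw [Finset.mul_sum]
  have step : ∀ i : ℕ, 2 * Real.sin θ * Real.cos ((2*(i:ℝ)+3) * θ)
      = Real.sin ((2*((i:ℝ)+1)+2)*θ) - Real.sin ((2*(i:ℝ)+2)*θ) := by
    intro i
    have e1 : (2*((i:ℝ)+1)+2)*θ = (2*(i:ℝ)+3)*θ + θ := by ring
    have e2 : (2*(i:ℝ)+2)*θ = (2*(i:ℝ)+3)*θ - θ := by ring
    rw [e1, e2, Real.sin_add, Real.sin_sub]; ring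
  calc ∑ i ∈ range (k-1), 2 * Real.sin θ * Real.cos ((2*(i:ℝ)+3) * θ)
      = ∑ i ∈ range (k-1), ((fun n : ℕ => Real.sin ((2*(n:ℝ)+2)*θ)) (i+1)
          - (fun n : ℕ => Real.sin ((2*(n:ℝ)+2)*θ)) i) := by
        apply Finset.sum_congr rfl; intro i _; rw [step i]; push_cast; ring_nf
    _ = Real.sin ((2*((k:ℝ)-1)+2)*θ) - Real.sin ((2*(0:ℝ)+2)*θ) := by
        rw [Finset.sum_range_sub (fun n : ℕ => Real.sin ((2*(n:ℝ)+2)*θ)) (k-1)]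
        have : ((k-1 : ℕ) : ℝ) = (k:ℝ) - 1 := by
          have : 1 ≤ k := by omega
          push_cast [this]; ring
        rw [this]; norm_num
    _ = 2 * Real.sin θ * (-2 * Real.cos θ) := by
        have hkθ : (2*((k:ℝ)-1)+2)*θ = 2*(k:ℝ)*π - 2*θ := by
          rw [hθ]; field_simp; ring
        have hsin0 : Real.sin (2*(k:ℝ)*π) = 0 := by
          have := Real.sin_nat_mul_pi (2*k)
          push_cast at this; linarith [this] -- assoc
        have hcos1 : Real.cos (2*(k:ℝ)*π) = 1 := by
          have := Real.cos_nat_mul_two_pi k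
          push_cast at this
          convert this using 2; ring
        rw [hkθ, Real.sin_sub, hsin0, hcos1]
        norm_num
        rw [show (2:ℝ)*θ = θ + θ by ring, Real.sin_add]
        ring

lemma sin_prod_sum (k : ℕ) (hk : 2 ≤ k) :
    ∑ i ∈ range (k-1), Real.sin (((i:ℝ)+1) * ((k:ℝ)*π/(k+1))) *
        Real.sin (((i:ℝ)+2) * ((k:ℝ)*π/(k+1))) =
      (((k:ℝ)+1)/2) * Real.cos ((k:ℝ)*π/(k+1)) := by
  set θ : ℝ := (k:ℝ)*π/(k+1) with hθ
  have prod : ∀ i : ℕ, Real.sin (((i:ℝ)+1)*θ) * Real.sin (((i:ℝ)+2)*θ)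
      = (Real.cos θ - Real.cos ((2*(i:ℝ)+3)*θ)) / 2 := by
    intro i
    have e2 : (2*(i:ℝ)+3)*θ = ((i:ℝ)+2)*θ + ((i:ℝ)+1)*θ := by ring
    have h3 := Real.cos_sub (((i:ℝ)+2)*θ) (((i:ℝ)+1)*θ)
    rw [show ((i:ℝ)+2)*θ - ((i:ℝ)+1)*θ = θ from by ring] at h3
    rw [e2, Real.cos_add, h3]; ring
  rw [Finset.sum_congr rfl (fun i _ => prod i)]
  have hsplit : ∑ i ∈ range (k-1), (Real.cos θ - Real.cos ((2*(i:ℝ)+3)*θ)) / 2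
      = ((k-1 : ℕ) : ℝ) * Real.cos θ / 2
        - (∑ i ∈ range (k-1), Real.cos ((2*(i:ℝ)+3)*θ)) / 2 := by
    simp only [sub_div]
    rw [Finset.sum_sub_distrib,
      Finset.sum_const, nsmul_eq_mul, Finset.card_range, mul_div_assoc, Finset.sum_div]
  rw [hsplit, cos_sum_eval k hk]
  have : ((k-1 : ℕ) : ℝ) = (k:ℝ) - 1 := by
    have h1 : 1 ≤ k := by omega
    push_cast [h1]; ring
  rw [this]; ring

theorem quadform_Ak_w (k d : ℕ) (hk : 2 ≤ k) (hd : 3 ≤ d)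
    (a b : ℝ) (ha : a = 1 / Real.sqrt d) (hb : b = Real.sqrt (d - 1) / d)
    (A : Matrix (Fin k) (Fin k) ℝ)
    (hA : A = Matrix.of fun i j : Fin k =>
      if (i : ℕ) + 1 = j ∨ (j : ℕ) + 1 = i then
        (if (i : ℕ) + (j : ℕ) = 1 then a else b)
      else 0)
    (w : Fin k → ℝ)
    (hw : w = fun l : Fin k => Real.sqrt (2 / (k + 1)) * Real.sin (((l : ℕ) + 1) * k * π / (k + 1))) :
    w ⬝ᵥ A.mulVec w =
      2 * (a - b) * w ⟨0, by omega⟩ * w ⟨1, by omega⟩ + 2 * b * Real.cos (k * π / (k + 1)) := by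
  set θ : ℝ := (k:ℝ)*π/((k:ℝ)+1) with hθ
  set c : ℝ := Real.sqrt (2/((k:ℝ)+1)) with hc
  set W : ℕ → ℝ := fun l => c * Real.sin (((l:ℝ)+1)*θ) with hWdef
  have hwW : ∀ i : Fin k, w i = W (i:ℕ) := by
    intro i; rw [hw]; simp only [hWdef]
    congr 1
    rw [hθ]; ring
  set E : ℕ → ℕ → ℝ := fun i j =>
    if i+1=j ∨ j+1=i then (if i+j=1 then a else b) else 0 with hE
  have hAE : ∀ i j : Fin k, A i j = E (i:ℕ) (j:ℕ) := by
    intro i j; rw [hA]; rfl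
  have expand : w ⬝ᵥ A.mulVec w
      = ∑ i ∈ range k, ∑ j ∈ range k, W i * (E i j * W j) := by
    rw [dotProduct,
      ← Fin.sum_univ_eq_sum_range (fun i => ∑ j ∈ range k, W i * (E i j * W j)) k]
    apply Finset.sum_congr rfl
    intro i _
    rw [Matrix.mulVec, dotProduct, hwW i, Finset.mul_sum,
        ← Fin.sum_univ_eq_sum_range (fun j => W (i:ℕ) * (E (i:ℕ) j * W j)) k]
    apply Finset.sum_congr rfl
    intro j _
    rw [hAE, hwW j]
  -- truncation helper
  have trunc : ∀ t : ℕ → ℝ,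
      ∑ i ∈ range k, (if i+1 < k then t i else 0) = ∑ i ∈ range (k-1), t i := by
    intro t
    rw [← Finset.sum_subset (Finset.range_subset_range.mpr (show k-1 ≤ k by omega))
        (fun x hx1 hx2 => by
          simp only [Finset.mem_range] at hx1 hx2
          rw [if_neg (by omega)])]
    exact Finset.sum_congr rfl (fun i hi => by
      simp only [Finset.mem_range] at hi
      rw [if_pos (by omega)])
  -- split the or-ite
  have split : ∀ i j : ℕ, W i * (E i j * W j)
      = (if i+1 = j then W i * ((if i+j=1 then a else b) * W j) else 0)
        + (if j+1 = i then W i * ((if i+j=1 then a else b) * W j) else 0) := by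
    intro i j
    simp only [hE]
    by_cases h1 : i+1 = j
    · rw [if_pos (Or.inl h1), if_pos h1, if_neg (show ¬(j+1 = i) by omega)]; ring
    · by_cases h2 : j+1 = i
      · rw [if_pos (Or.inr h2), if_neg h1, if_pos h2]; ring
      · rw [if_neg (by tauto), if_neg h1, if_neg h2]; ring
  have key : ∑ i ∈ range k, ∑ j ∈ range k, W i * (E i j * W j)
      = 2 * ∑ i ∈ range (k-1), W i * ((if i = 0 then a else b) * W (i+1)) := by
    have e1 : ∑ i ∈ range k, ∑ j ∈ range k, W i * (E i j * W j)
        = (∑ i ∈ range k, ∑ j ∈ range k,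
            (if i+1 = j then W i * ((if i+j=1 then a else b) * W j) else 0))
          + (∑ i ∈ range k, ∑ j ∈ range k,
            (if j+1 = i then W i * ((if i+j=1 then a else b) * W j) else 0)) := by
      rw [← Finset.sum_add_distrib]
      apply Finset.sum_congr rfl; intro i _
      rw [← Finset.sum_add_distrib]
      exact Finset.sum_congr rfl (fun j _ => split i j)
    rw [e1]
    have eS1 : ∑ i ∈ range k, ∑ j ∈ range k,
        (if i+1 = j then W i * ((if i+j=1 then a else b) * W j) else 0)
        = ∑ i ∈ range (k-1), W i * ((if i = 0 then a else b) * W (i+1)) := by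
      rw [← trunc (fun i => W i * ((if i = 0 then a else b) * W (i+1)))]
      apply Finset.sum_congr rfl; intro i _
      have hse := Finset.sum_ite_eq (range k) (i+1)
        (fun j => W i * ((if i+j=1 then a else b) * W j))
      simp only [Finset.mem_range] at hse
      rw [hse]
      by_cases h : i+1 < k
      · rw [if_pos h, if_pos h]
        congr 2
        by_cases h0 : i = 0
        · rw [if_pos (by omega), if_pos h0]
        · rw [if_neg (by omega), if_neg h0]
      · rw [if_neg h, if_neg h]
    have eS2 : ∑ i ∈ range k, ∑ j ∈ range k,
        (if j+1 = i then W i * ((if i+j=1 then a else b) * W j) else 0)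
        = ∑ i ∈ range (k-1), W i * ((if i = 0 then a else b) * W (i+1)) := by
      rw [Finset.sum_comm,
        ← trunc (fun j => W j * ((if j = 0 then a else b) * W (j+1)))]
      apply Finset.sum_congr rfl; intro j _
      have hse := Finset.sum_ite_eq (range k) (j+1)
        (fun i => W i * ((if i+j=1 then a else b) * W j))
      simp only [Finset.mem_range] at hse
      rw [hse]
      by_cases h : j+1 < k
      · rw [if_pos h, if_pos h]
        by_cases h0 : j = 0
        · rw [if_pos (by omega), if_pos h0]; ring
        · rw [if_neg (by omega), if_neg h0]; ring
      · rw [if_neg h, if_neg h]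
    rw [eS1, eS2]; ring
  -- key trig identity
  have hc2 : c^2 = 2/((k:ℝ)+1) := by
    rw [hc]; exact Real.sq_sqrt (by positivity)
  have T : ∑ i ∈ range (k-1), W i * W (i+1) = Real.cos θ := by
    have e : ∀ i : ℕ, W i * W (i+1)
        = c^2 * (Real.sin (((i:ℝ)+1)*θ) * Real.sin (((i:ℝ)+2)*θ)) := by
      intro i; simp only [hWdef]
      rw [show (((i+1:ℕ):ℝ)+1)*θ = ((i:ℝ)+2)*θ from by push_cast; ring]
      ring
    rw [Finset.sum_congr rfl (fun i _ => e i), ← Finset.mul_sum,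
      sin_prod_sum k hk, hc2]
    have : ((k:ℝ)+1) ≠ 0 := by positivity
    field_simp
    rw [hθ]
  rw [expand, key]
  -- split off first term
  have hw0 : w ⟨0, by omega⟩ = W 0 := by rw [hwW ⟨0, by omega⟩]
  have hw1 : w ⟨1, by omega⟩ = W 1 := by rw [hwW ⟨1, by omega⟩]
  rw [hw0, hw1]
  obtain ⟨m, rfl⟩ : ∃ m, k = m + 2 := ⟨k - 2, by omega⟩
  have hrange : (m:ℕ) + 2 - 1 = m + 1 := by omega
  simp only [hrange] at T ⊢
  rw [Finset.sum_range_succ' (fun i => W i * ((if i = 0 then a else b) * W (i+1))) m]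
  rw [Finset.sum_range_succ' (fun i => W i * W (i+1)) m] at T
  have hfb : ∑ i ∈ range m, W (i+1) * ((if i+1 = 0 then a else b) * W (i+1+1))
      = b * ∑ i ∈ range m, W (i+1) * W (i+1+1) := by
    rw [Finset.mul_sum]
    exact Finset.sum_congr rfl (fun i _ => by rw [if_neg (Nat.succ_ne_zero i)]; ring)
  show 2 * (∑ i ∈ range m, W (i+1) * ((if i+1 = 0 then a else b) * W (i+1+1))
      + W 0 * ((if (0:ℕ) = 0 then a else b) * W (0+1))) = _
  rw [hfb, if_pos rfl]
  linear_combination (2*b) * T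
end

section
/- For integers d ≥ 2 and k ≥ 2, the minimum eigenvalue of A_k satisfies λ_min(A_k) ≤ -(2√(d-1)/d)·(cos(π/(k+1)) + (√(d/(d-1)) - 1)·(2/(k+1))·sin(π/(k+1))·sin(2π/(k+1))). -/
/-! The vector `x i = (-1)^i sin((i+1)θ)`, `θ = π/(k+1)`, is the eigenvector of the path on `k`
vertices for its least eigenvalue `-2 cos θ`; its Rayleigh quotient bounds `λ_min(A_k)` from
above. Writing `b = √(d-1)/d` and `1/√d = b √(d/(d-1))`, `A_k` is `b` times the path adjacency
matrix plus a heavier weight on the edge `{0,1}`, so `xᵀ A_k x` is `-b (k+1) cos θ` plus the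
correction `-2 (1/√d - b) sin θ sin 2θ` from that edge, while `‖x‖² = (k+1)/2`. The trigonometric
sums telescope after multiplication by `2 sin θ`. -/

open Real Matrix
open Finset Unitary
open scoped ComplexOrder

namespace Matrix

lemma dotProduct_add_transpose_mulVec {n R : Type*} [Fintype n] [CommRing R] (M : Matrix n n R)
    (x : n → R) : x ⬝ᵥ ((M + Mᵀ) *ᵥ x) = 2 * (x ⬝ᵥ (M *ᵥ x)) := by
  rw [add_mulVec, dotProduct_add, mulVec_transpose, dotProduct_comm x (x ᵥ* M),
    ← dotProduct_mulVec, two_mul]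

variable {n 𝕜 : Type*} [Fintype n] [DecidableEq n] [RCLike 𝕜] {A : Matrix n n 𝕜}

lemma IsHermitian.posSemidef_sub_smul_one (hA : A.IsHermitian) {μ : ℝ}
    (hμ : ∀ i, μ ≤ hA.eigenvalues i) : (A - (μ : 𝕜) • 1).PosSemidef := by
  have hconj : A - (μ : 𝕜) • 1 = conjStarAlgAut 𝕜 _ hA.eigenvectorUnitary
      (diagonal (RCLike.ofReal ∘ hA.eigenvalues) - (μ : 𝕜) • 1) := by
    rw [map_sub, map_smul, map_one, ← hA.spectral_theorem]
  rw [hconj, conjStarAlgAut_apply, ← diagonal_one, ← diagonal_smul, diagonal_sub,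
    isUnit_coe.posSemidef_star_right_conjugate_iff, posSemidef_diagonal_iff]
  intro i
  simp [hμ]

lemma IsHermitian.iInf_eigenvalues_mul_dotProduct_le (hA : A.IsHermitian) (x : n → 𝕜) :
    ((⨅ i, hA.eigenvalues i : ℝ) : 𝕜) * (star x ⬝ᵥ x) ≤ star x ⬝ᵥ (A *ᵥ x) := by
  have := (hA.posSemidef_sub_smul_one fun i => ciInf_le (Finite.bddBelow_range _) i)
    |>.dotProduct_mulVec_nonneg x
  rwa [sub_mulVec, smul_mulVec, one_mulVec, dotProduct_sub, dotProduct_smul, smul_eq_mul,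
    sub_nonneg] at this

end Matrix

section Superdiagonal

variable {R : Type*} [CommRing R]

def superdiagMatrix (k : ℕ) (w : ℕ → R) : Matrix (Fin k) (Fin k) R :=
  of fun i j => if (i : ℕ) + 1 = j then w i else 0

lemma superdiagMatrix_mulVec_apply (k : ℕ) (w x : ℕ → R) (i : Fin k) :
    (superdiagMatrix k w *ᵥ fun j => x j) i = if (i : ℕ) + 1 < k then w i * x (i + 1) else 0 := by
  simp only [mulVec, dotProduct, superdiagMatrix, of_apply]
  rw [Fin.sum_univ_eq_sum_range (fun j => (if (i : ℕ) + 1 = j then w i else 0) * x j)]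
  simp [ite_mul, sum_ite_eq]

lemma dotProduct_superdiagMatrix_mulVec (k : ℕ) (w x : ℕ → R) :
    (fun i : Fin k => x i) ⬝ᵥ (superdiagMatrix k w *ᵥ fun i => x i) =
      ∑ i ∈ range (k - 1), w i * (x i * x (i + 1)) := by
  simp only [dotProduct, superdiagMatrix_mulVec_apply]
  rw [Fin.sum_univ_eq_sum_range (fun i => x i * if i + 1 < k then w i * x (i + 1) else 0)]
  rcases k with _ | k
  · simp
  rw [sum_range_succ, if_neg (lt_irrefl _), mul_zero, add_zero, Nat.add_sub_cancel]
  refine sum_congr rfl fun i hi => ?_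
  rw [if_pos (Nat.succ_lt_succ (mem_range.mp hi))]
  ring

lemma sum_range_ite_eq_zero_mul {n : ℕ} (hn : 0 < n) (b c : R) (f : ℕ → R) :
    ∑ i ∈ range n, (if i = 0 then c else b) * f i = b * ∑ i ∈ range n, f i + (c - b) * f 0 := by
  obtain ⟨n, rfl⟩ : ∃ m, n = m + 1 := ⟨n - 1, by omega⟩
  simp only [sum_range_succ', if_pos, Nat.succ_ne_zero, if_false, mul_add, mul_sum]
  ring

end Superdiagonal

lemma two_sin_mul_sum_range_cos (θ a : ℝ) (n : ℕ) :
    2 * sin θ * ∑ j ∈ range n, cos ((2 * j + a) * θ) =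
      sin ((2 * n + a - 1) * θ) - sin ((a - 1) * θ) := by
  induction n with
  | zero => simp
  | succ n ih =>
    rw [sum_range_succ, mul_add, ih, two_mul_sin_mul_cos,
      show θ - (2 * n + a) * θ = -((2 * n + a - 1) * θ) by ring, sin_neg]
    push_cast
    ring_nf

lemma sin_pi_div_succ_pos {k : ℕ} (hk : 0 < k) : 0 < sin (π / (k + 1)) :=
  sin_pos_of_pos_of_lt_pi (by positivity) (div_lt_self pi_pos (by simpa using hk))

lemma sum_range_sin_sq {k : ℕ} (hk : 0 < k) :
    ∑ j ∈ range k, sin ((j + 1) * (π / (k + 1))) ^ 2 = (k + 1) / 2 := by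
  set θ := π / (k + 1)
  have hcos : 2 * sin θ * ∑ j ∈ range k, cos ((2 * j + 2) * θ) = 2 * sin θ * (-1) := by
    rw [two_sin_mul_sum_range_cos]
    have : (2 * k + 2 - 1) * θ = 2 * π - θ := by simp only [θ]; field_simp
    rw [this, sin_two_pi_sub, show ((2 : ℝ) - 1) * θ = θ by ring]; ring
  have hsin : 2 * sin θ ≠ 0 := by have := sin_pi_div_succ_pos hk; positivity
  have hterm (j : ℕ) : sin ((j + 1) * θ) ^ 2 = 1 / 2 - cos ((2 * j + 2) * θ) / 2 := by
    rw [sin_sq_eq_half_sub]; ring_nf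
  rw [sum_congr rfl fun j _ => hterm j, sum_sub_distrib,
    ← sum_div _ fun j : ℕ => cos ((2 * j + 2) * θ), mul_left_cancel₀ hsin hcos]
  simp
  ring

lemma sum_range_sin_mul_sin {k : ℕ} (hk : 0 < k) :
    ∑ j ∈ range (k - 1), sin ((j + 1) * (π / (k + 1))) * sin ((j + 2) * (π / (k + 1))) =
      (k + 1) * cos (π / (k + 1)) / 2 := by
  set θ := π / (k + 1)
  have hcos : 2 * sin θ * ∑ j ∈ range (k - 1), cos ((2 * j + 3) * θ) =
      2 * sin θ * (-2 * cos θ) := by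
    rw [two_sin_mul_sum_range_cos]
    have : (2 * ((k - 1 : ℕ) : ℝ) + 3 - 1) * θ = 2 * π - 2 * θ := by
      rw [Nat.cast_sub hk]; simp only [θ]; field_simp; ring
    rw [this, sin_two_pi_sub, show ((3 : ℝ) - 1) * θ = 2 * θ by ring, sin_two_mul]; ring
  have hsin : 2 * sin θ ≠ 0 := by have := sin_pi_div_succ_pos hk; positivity
  have hterm (j : ℕ) :
      sin ((j + 1) * θ) * sin ((j + 2) * θ) = (cos θ - cos ((2 * j + 3) * θ)) / 2 := by
    have := two_mul_sin_mul_sin ((j + 1) * θ) ((j + 2) * θ)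
    rw [show (j + 1) * θ - (j + 2) * θ = -θ by ring, cos_neg,
      show (j + 1) * θ + (j + 2) * θ = (2 * j + 3) * θ by ring] at this
    linarith
  rw [sum_congr rfl fun j _ => hterm j, ← sum_div, sum_sub_distrib, mul_left_cancel₀ hsin hcos]
  simp [Nat.cast_sub hk]
  ring

noncomputable def alternatingSine (θ : ℝ) (n : ℕ) : ℝ := (-1) ^ n * sin ((n + 1) * θ)

lemma alternatingSine_mul_succ (θ : ℝ) (n : ℕ) :
    alternatingSine θ n * alternatingSine θ (n + 1) = -(sin ((n + 1) * θ) * sin ((n + 2) * θ)) := by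
  simp only [alternatingSine, pow_succ]
  push_cast
  ring_nf
  simp

lemma dotProduct_alternatingSine_self {k : ℕ} (hk : 0 < k) :
    (fun i : Fin k => alternatingSine (π / (k + 1)) i) ⬝ᵥ
      (fun i : Fin k => alternatingSine (π / (k + 1)) i) = (k + 1) / 2 := by
  rw [dotProduct, Fin.sum_univ_eq_sum_range (fun i => alternatingSine (π / (k + 1)) i *
    alternatingSine (π / (k + 1)) i), ← sum_range_sin_sq hk]
  refine sum_congr rfl fun i _ => ?_
  simp only [alternatingSine]
  ring_nf
  simp

lemma one_div_sqrt_eq_sqrt_sub_one_div_mul_sqrt {t : ℝ} (ht : 1 < t) :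
    1 / √t = √(t - 1) / t * √(t / (t - 1)) := by
  rw [div_mul_eq_mul_div, ← sqrt_mul (by linarith), mul_div_cancel₀ _ (by linarith),
    sqrt_div_self']

theorem minEig_Ak_upper_bound (k d : ℕ) (hk : 2 ≤ k) (hd : 2 ≤ d)
    (A : Matrix (Fin k) (Fin k) ℝ)
    (hA : A = Matrix.of fun i j : Fin k =>
      if (i : ℕ) + 1 = j ∨ (j : ℕ) + 1 = i then
        (if (i : ℕ) + (j : ℕ) = 1 then 1 / Real.sqrt d else Real.sqrt (d - 1) / d)
      else 0)
    (hH : A.IsHermitian) :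
    haveI : Nonempty (Fin k) := ⟨⟨0, by omega⟩⟩
    (⨅ i, hH.eigenvalues i) ≤
      -(2 * Real.sqrt (d - 1) / d) *
        (Real.cos (π / (k + 1)) +
          (Real.sqrt (d / (d - 1)) - 1) * (2 / (k + 1)) *
            Real.sin (π / (k + 1)) * Real.sin (2 * π / (k + 1))) := by
  set b := √(d - 1) / d
  set r := √(d / (d - 1))
  set w : ℕ → ℝ := fun n => if n = 0 then b * r else b
  set x : Fin k → ℝ := fun i => alternatingSine (π / (k + 1)) i
  have hc : 1 / √d = b * r :=
    one_div_sqrt_eq_sqrt_sub_one_div_mul_sqrt (by exact_mod_cast hd)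
  have hA' : A = superdiagMatrix k w + (superdiagMatrix k w)ᵀ := by
    rw [hA, hc]
    ext i j
    simp only [superdiagMatrix, w, of_apply, Matrix.add_apply, transpose_apply]
    split_ifs <;> first | omega | simp
  have hxAx : x ⬝ᵥ (A *ᵥ x) = -(b * ((k + 1) * cos (π / (k + 1)))) -
      2 * (b * r - b) * (sin (π / (k + 1)) * sin (2 * (π / (k + 1)))) := by
    rw [hA', dotProduct_add_transpose_mulVec, dotProduct_superdiagMatrix_mulVec,
      sum_range_ite_eq_zero_mul (by omega)]
    simp only [alternatingSine_mul_succ, sum_neg_distrib]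
    rw [sum_range_sin_mul_sin (by omega)]
    simp only [Nat.cast_zero, zero_add, one_mul]
    ring
  have hray := hH.iInf_eigenvalues_mul_dotProduct_le x
  rw [star_trivial, dotProduct_alternatingSine_self (by omega), hxAx] at hray
  rw [mul_div_assoc 2 π]
  refine le_of_mul_le_mul_right (hray.trans_eq ?_) (by positivity : (0 : ℝ) < (k + 1) / 2)
  simp only [b]
  field_simp
  ring
end

section
/- Let G be a finite d-regular graph with girth at least 2k, and for a real vector α = (α_0, ..., α_{k-1}) define for each vertex i the vector v_i ∈ ℝ^V by (v_i)_j = α_ℓ if dist(i,j) = ℓ < k and 0 otherwise. Then the squared norm of v_i equals α_0² + Σ_{ℓ=1}^{k-1} d(d-1)^{ℓ-1} α_ℓ². -/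
/-!
Two distinct paths with common endpoints contain a cycle of length at most the sum of their
lengths, so, as the girth is at least `2k`, paths from `i` whose lengths add up to less than `2k`
are determined by their endpoints. Hence a vertex at distance `1 ≤ ℓ < k` from `i` has exactly
one neighbour at distance `ℓ - 1` and none at distance `ℓ`, hence `d - 1` at distance `ℓ + 1`.
Double counting the edges between consecutive spheres `S_ℓ` around `i` gives
`|S_ℓ| = d (d - 1)^(ℓ - 1)`, and grouping the entries of `v_i` by distance gives the norm.
-/

namespace SimpleGraph

variable {V : Type*} {G : SimpleGraph V}

open Finset

theorem Walk.IsPath.eq_of_length_add_length_lt_egirth {u v : V} {p q : G.Walk u v}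
    (hp : p.IsPath) (hq : q.IsPath) (hlt : ((p.length + q.length : ℕ) : ℕ∞) < G.egirth) :
    p = q := by
  by_contra hne
  obtain ⟨_, -, -, c, hc, hlen⟩ := hp.exists_isCycle_length_le_add_of_ne hq hne
  exact (egirth_le_length hc).not_gt (lt_of_le_of_lt (by exact_mod_cast hlen) hlt)

theorem Walk.dist_lt_length_of_mem_support {u v w : V} (p : G.Walk u v) (hw : w ∈ p.support)
    (hwv : w ≠ v) : G.dist u w < p.length := by
  classical
  exact (dist_le _).trans_lt (p.length_takeUntil_lt_length hw hwv)

theorem Walk.IsPath.concat_of_length_le_dist {u v w : V} {p : G.Walk u v} (hp : p.IsPath)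
    (h : G.Adj v w) (hle : p.length ≤ G.dist u w) : (p.concat h).IsPath :=
  hp.concat (fun hw => (p.dist_lt_length_of_mem_support hw h.ne').not_ge hle) h

variable {i : V} {m d : ℕ}

theorem eq_of_adj_of_dist_eq_succ (hg : ((2 * m + 2 : ℕ) : ℕ∞) < G.egirth) {u₁ u₂ j : V}
    (hr₁ : G.Reachable i u₁) (hr₂ : G.Reachable i u₂) (hd₁ : G.dist i u₁ = m)
    (hd₂ : G.dist i u₂ = m) (hj : G.dist i j = m + 1) (h₁ : G.Adj u₁ j)
    (h₂ : G.Adj u₂ j) :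
    u₁ = u₂ := by
  obtain ⟨p₁, hp₁, hl₁⟩ := hr₁.exists_path_of_dist
  obtain ⟨p₂, hp₂, hl₂⟩ := hr₂.exists_path_of_dist
  have heq : p₁.concat h₁ = p₂.concat h₂ :=
    (hp₁.concat_of_length_le_dist h₁ (by omega)).eq_of_length_add_length_lt_egirth
      (hp₂.concat_of_length_le_dist h₂ (by omega))
      (by simpa [hl₁, hl₂, hd₁, hd₂, two_mul, add_add_add_comm] using hg)
  exact (Walk.concat_inj heq).1

theorem not_adj_of_dist_eq_of_dist_eq (hg : ((2 * m + 1 : ℕ) : ℕ∞) < G.egirth) {u j : V}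
    (hru : G.Reachable i u) (hrj : G.Reachable i j) (hu : G.dist i u = m)
    (hj : G.dist i j = m) : ¬G.Adj u j := by
  intro h
  obtain ⟨p, hp, hl⟩ := hru.exists_path_of_dist
  obtain ⟨q, hq, hl'⟩ := hrj.exists_path_of_dist
  have heq : p = q.concat h.symm :=
    hp.eq_of_length_add_length_lt_egirth (hq.concat_of_length_le_dist h.symm (by omega))
      (by simpa [hl, hl', hu, hj, two_mul, add_assoc] using hg)
  have := congrArg Walk.length heq
  simp [hl, hl', hu, hj] at this

theorem exists_adj_dist_eq_of_dist_eq_succ {j : V} (hj : G.dist i j = m + 1) :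
    ∃ u, G.Reachable i u ∧ G.dist i u = m ∧ G.Adj u j := by
  obtain ⟨p, hl⟩ := exists_walk_of_dist_ne_zero (G := G) (u := i) (v := j) (by omega)
  have hp : ¬p.Nil := Walk.not_nil_iff_lt_length.mpr (by omega)
  have hadj := Walk.adj_penultimate hp
  have hle : G.dist i p.penultimate ≤ m :=
    (dist_le p.dropLast).trans (by rw [Walk.length_dropLast]; omega)
  have hge := hadj.reachable.dist_triangle_right i
  rw [dist_eq_one_iff_adj.mpr hadj] at hge
  exact ⟨p.penultimate, ⟨p.dropLast⟩, by omega, hadj⟩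

variable [Fintype V] [DecidableEq V] [DecidableRel G.Adj]

-- `G.dist i j = 0` also when `j` is unreachable from `i`, hence the `Reachable` conjunct.
variable (G) in
noncomputable def sphereFinset (i : V) (m : ℕ) : Finset V :=
  {j | G.Reachable i j ∧ G.dist i j = m}

@[simp]
theorem mem_sphereFinset {j : V} :
    j ∈ G.sphereFinset i m ↔ G.Reachable i j ∧ G.dist i j = m := by
  simp [sphereFinset]

theorem sphereFinset_zero : G.sphereFinset i 0 = {i} := by
  ext j
  simp only [mem_sphereFinset, mem_singleton]
  exact ⟨fun ⟨hr, h⟩ => (hr.dist_eq_zero_iff.mp h).symm,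
    fun h => h ▸ ⟨.rfl, dist_self⟩⟩

theorem sphereFinset_one : G.sphereFinset i 1 = G.neighborFinset i := by
  ext j
  simp only [mem_sphereFinset, dist_eq_one_iff_adj, mem_neighborFinset, and_iff_right_iff_imp]
  exact Adj.reachable

theorem card_bipartiteBelow_sphereFinset (hg : ((2 * m + 2 : ℕ) : ℕ∞) < G.egirth) {j : V}
    (hj : j ∈ G.sphereFinset i (m + 1)) :
    #((G.sphereFinset i m).bipartiteBelow G.Adj j) = 1 := by
  obtain ⟨u, hur, hud, huj⟩ := exists_adj_dist_eq_of_dist_eq_succ (mem_sphereFinset.mp hj).2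
  refine card_eq_one.mpr ⟨u, eq_singleton_iff_unique_mem.mpr ⟨by simp [hur, hud, huj], ?_⟩⟩
  simp only [mem_bipartiteBelow, mem_sphereFinset]
  rintro x ⟨⟨hxr, hxd⟩, hxj⟩
  exact eq_of_adj_of_dist_eq_succ hg hxr hur hxd hud (mem_sphereFinset.mp hj).2 hxj huj

theorem card_bipartiteAbove_sphereFinset (hreg : G.IsRegularOfDegree d)
    (hg : ((2 * m + 3 : ℕ) : ℕ∞) < G.egirth) {u : V} (hu : u ∈ G.sphereFinset i (m + 1)) :
    #((G.sphereFinset i (m + 2)).bipartiteAbove G.Adj u) = d - 1 := by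
  have hparents := card_bipartiteBelow_sphereFinset (hg.trans' (by norm_cast; omega)) hu
  rw [mem_sphereFinset] at hu
  have hchildren : (G.sphereFinset i (m + 2)).bipartiteAbove G.Adj u =
      G.neighborFinset u \ (G.sphereFinset i m).bipartiteBelow G.Adj u := by
    ext j
    simp only [mem_bipartiteAbove, mem_bipartiteBelow, mem_sdiff, mem_neighborFinset,
      mem_sphereFinset]
    refine ⟨fun ⟨⟨_, hj⟩, h⟩ => ⟨h, fun ⟨⟨_, hj'⟩, _⟩ => by omega⟩,
      fun ⟨h, hnot_parent⟩ => ?_⟩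
    have hr : G.Reachable i j := hu.1.trans h.reachable
    have hnot_sibling : G.dist i j ≠ m + 1 := fun hj =>
      not_adj_of_dist_eq_of_dist_eq hg hu.1 hr hu.2 hj h
    refine ⟨⟨hr, ?_⟩, h⟩
    rcases h.diff_dist_adj (u := i) with hj | hj | hj
    · omega
    · omega
    · exact absurd ⟨⟨hr, by omega⟩, h.symm⟩ hnot_parent
  rw [hchildren, card_sdiff_of_subset, card_neighborFinset_eq_degree, hreg u, hparents]
  intro x hx
  exact (mem_neighborFinset _ _ _).mpr ((mem_bipartiteBelow G.Adj).mp hx).2.symm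

theorem card_sphereFinset_succ (hreg : G.IsRegularOfDegree d)
    (hg : ((2 * (m + 1) : ℕ) : ℕ∞) < G.egirth) :
    #(G.sphereFinset i (m + 1)) = d * (d - 1) ^ m := by
  induction m with
  | zero => simp [sphereFinset_one, hreg i]
  | succ m ih =>
    have hg' : ((2 * m + 3 : ℕ) : ℕ∞) < G.egirth := hg.trans' (by norm_cast; omega)
    have hcount := card_mul_eq_card_mul (s := G.sphereFinset i (m + 1))
      (t := G.sphereFinset i (m + 2)) G.Adj
      (fun u hu => card_bipartiteAbove_sphereFinset hreg hg' hu)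
      (fun j hj => card_bipartiteBelow_sphereFinset (hg.trans_le' (by norm_cast)) hj)
    rw [mul_one, ih (hg.trans' (by norm_cast; omega))] at hcount
    rw [← hcount, pow_succ, mul_assoc]

theorem sum_ite_dist_lt_eq_sum_card_sphereFinset {M : Type*} [AddCommMonoid M] (f : ℕ → M)
    (k : ℕ) :
    ∑ j, (if G.Reachable i j ∧ G.dist i j < k then f (G.dist i j) else 0) =
      ∑ m ∈ range k, #(G.sphereFinset i m) • f m := by
  calc ∑ j, (if G.Reachable i j ∧ G.dist i j < k then f (G.dist i j) else 0)
      = ∑ j, ∑ m ∈ range k, if j ∈ G.sphereFinset i m then f m else 0 := by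
        refine sum_congr rfl fun j _ => ?_
        by_cases hr : G.Reachable i j <;> simp [hr]
    _ = ∑ m ∈ range k, #(G.sphereFinset i m) • f m := by
        rw [sum_comm]
        exact sum_congr rfl fun m _ => by rw [sum_ite_mem, univ_inter, sum_const]

end SimpleGraph

open Real

theorem norm_sq_explicit_vector {V : Type*} [Fintype V] [DecidableEq V]
    (G : SimpleGraph V) [DecidableRel G.Adj] (d k : ℕ) (hd : 2 ≤ d) (hk : 2 ≤ k)
    (hreg : G.IsRegularOfDegree d) (hgirth : 2 * k ≤ G.girth)
    (α : ℕ → ℝ)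
    (v : V → V → ℝ)
    (hv : v = fun i j => if G.Reachable i j ∧ G.dist i j < k then α (G.dist i j) else 0)
    (i : V) :
    ∑ j, (v i j) ^ 2 =
      α 0 ^ 2 + ∑ ℓ ∈ Finset.Ico 1 k, (d : ℝ) * (d - 1) ^ (ℓ - 1) * α ℓ ^ 2 := by
  have hegirth : ((2 * k : ℕ) : ℕ∞) ≤ G.egirth :=
    (Nat.cast_le.mpr hgirth).trans G.egirth.natCast_toNat_le_self
  have hsphere : ∀ ℓ ∈ Finset.Ico 1 k,
      ((G.sphereFinset i ℓ).card : ℝ) = d * (d - 1) ^ (ℓ - 1) := by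
    intro ℓ hℓ
    obtain ⟨hℓ₁, hℓk⟩ := Finset.mem_Ico.mp hℓ
    obtain ⟨m, rfl⟩ : ∃ m, ℓ = m + 1 := ⟨ℓ - 1, by omega⟩
    rw [G.card_sphereFinset_succ hreg (hegirth.trans_lt' (by norm_cast; omega))]
    simp [Nat.cast_sub (by omega : 1 ≤ d)]
  subst hv
  simp only [ite_pow, zero_pow two_ne_zero]
  rw [G.sum_ite_dist_lt_eq_sum_card_sphereFinset (α · ^ 2), Finset.range_eq_Ico,
    Finset.sum_eq_sum_Ico_succ_bot (by omega), SimpleGraph.sphereFinset_zero]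
  simp only [nsmul_eq_mul, Finset.card_singleton, Nat.cast_one, one_mul]
  congr 1
  exact Finset.sum_congr rfl fun ℓ hℓ => by rw [hsphere ℓ hℓ]
end

section
/- Let G be a finite d-regular graph with girth at least 2k, and for α ∈ ℝ^k define v_i ∈ ℝ^V by (v_i)_j = α_ℓ if dist(i,j) = ℓ < k, 0 otherwise. Then for every edge (i,j) ∈ E, the inner product satisfies v_i · v_j = 2α_0α_1 + 2(d-1)α_1α_2 + ⋯ + 2(d-1)^{k-2}α_{k-2}α_{k-1}; in particular this value is the same for all edges. -/
open Real SimpleGraph Finset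

section Aux

variable {V : Type*} {G : SimpleGraph V}

lemma myEdgeStart {a c x : V} (r : G.Walk a c) (hr : r.IsPath) (he : s(a,x) ∈ r.edges)
    (hax : a ≠ x) : ∃ (h : G.Adj a x) (r' : G.Walk x c), r = SimpleGraph.Walk.cons h r' := by
  cases r with
  | nil => simp at he
  | cons h' r' =>
    rw [SimpleGraph.Walk.edges_cons, List.mem_cons] at he
    rcases he with he | he
    · obtain rfl := Sym2.congr_right.mp he
      exact ⟨h', r', rfl⟩
    · exact absurd (SimpleGraph.Walk.fst_mem_support_of_mem_edges r' he)
        ((SimpleGraph.Walk.cons_isPath_iff _ _ |>.mp hr).2)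

lemma myExistsShortCycle : ∀ (n : ℕ) {a b : V} (p q : G.Walk a b), p.IsPath → q.IsPath →
    p ≠ q → p.length ≤ n →
    ∃ (x : V) (c : G.Walk x x), c.IsCycle ∧ c.length ≤ p.length + q.length := by
  intro n
  induction n with
  | zero =>
    intro a b p q hp hq hne hlen
    cases p with
    | nil =>
      exact absurd ((SimpleGraph.Walk.isPath_iff_eq_nil (p := q)).mp hq).symm hne
    | cons ha p' => simp [SimpleGraph.Walk.length_cons] at hlen
  | succ n ih =>
    intro a b p q hp hq hne hlen
    cases p with
    | nil =>
      exact absurd ((SimpleGraph.Walk.isPath_iff_eq_nil (p := q)).mp hq).symm hne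
    | @cons _ x _ ha p' =>
      cases q with
      | nil =>
        rw [SimpleGraph.Walk.isPath_iff_eq_nil] at hp
        simp at hp
      | @cons _ y _ hb q' =>
        by_cases hxy : x = y
        · subst hxy
          have hne' : p' ≠ q' := by rintro rfl; exact hne rfl
          obtain ⟨z, c, hc, hcl⟩ := ih p' q'
            ((SimpleGraph.Walk.cons_isPath_iff _ _).mp hp).1
            ((SimpleGraph.Walk.cons_isPath_iff _ _).mp hq).1 hne'
            (by simp only [SimpleGraph.Walk.length_cons] at hlen; omega)
          exact ⟨z, c, hc, by simp only [SimpleGraph.Walk.length_cons]; omega⟩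
        
        · by_cases hxq : x ∈ (SimpleGraph.Walk.cons hb q').support
          · classical
            set Q := SimpleGraph.Walk.cons hb q' with hQdef
            have ht : (Q.takeUntil x hxq).IsPath := hq.takeUntil hxq
            have hax : a ≠ x := ha.ne
            have hedge : s(a,x) ∉ (Q.takeUntil x hxq).edges := by
              intro he
              obtain ⟨h', r', hr⟩ := myEdgeStart _ ht he hax
              have hr'nil : r' = SimpleGraph.Walk.nil := by
                rw [← SimpleGraph.Walk.isPath_iff_eq_nil]
                rw [hr] at ht
                exact ((SimpleGraph.Walk.cons_isPath_iff _ _).mp ht).1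
              have hspec := Q.take_spec hxq
              rw [hr, hr'nil] at hspec
              simp only [SimpleGraph.Walk.cons_append, SimpleGraph.Walk.nil_append] at hspec
              have h2 := congrArg (fun w => w.getVert 1) hspec
              simp only [hQdef, SimpleGraph.Walk.getVert_cons_succ,
                SimpleGraph.Walk.getVert_zero] at h2
              exact hxy h2
            refine ⟨a, SimpleGraph.Walk.cons ha (Q.takeUntil x hxq).reverse, ?_, ?_⟩
            · rw [SimpleGraph.Walk.cons_isCycle_iff]
              refine ⟨ht.reverse, ?_⟩
              rw [SimpleGraph.Walk.edges_reverse, List.mem_reverse]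
              exact hedge
            · have h3 := Q.length_takeUntil_le hxq
              simp only [SimpleGraph.Walk.length_cons, SimpleGraph.Walk.length_reverse] at *
              omega
          · have hQ : (SimpleGraph.Walk.cons ha.symm (SimpleGraph.Walk.cons hb q')).IsPath :=
              hq.cons hxq
            have hne' : p' ≠ SimpleGraph.Walk.cons ha.symm (SimpleGraph.Walk.cons hb q') := by
              intro h
              have haa : a ∈ p'.support := by
                rw [h]; simp [SimpleGraph.Walk.support_cons]
              exact ((SimpleGraph.Walk.cons_isPath_iff _ _).mp hp).2 haa
            obtain ⟨z, c, hc, hcl⟩ := ih p' _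
              ((SimpleGraph.Walk.cons_isPath_iff _ _).mp hp).1 hQ hne'
              (by simp only [SimpleGraph.Walk.length_cons] at hlen ⊢; omega)
            exact ⟨z, c, hc, by simp only [SimpleGraph.Walk.length_cons] at hcl ⊢; omega⟩

lemma myShortPathsEq {k : ℕ} (hg : 2 * k ≤ G.girth) {a b : V} {p q : G.Walk a b}
    (hp : p.IsPath) (hq : q.IsPath) (hlen : p.length + q.length < 2 * k) : p = q := by
  by_contra hne
  obtain ⟨x, c, hc, hcl⟩ := myExistsShortCycle (p.length + q.length) p q hp hq hne (Nat.le_add_right _ _)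
  have h1 : G.egirth ≤ c.length := SimpleGraph.le_egirth.mp le_rfl x c hc
  have h2 : G.girth ≤ c.length := by
    have := ENat.toNat_le_toNat h1 (by simp)
    simpa [SimpleGraph.girth] using this
  omega


lemma myDistTri {a b c : V} (hab : G.Reachable a b) (hbc : G.Reachable b c) :
    G.dist a c ≤ G.dist a b + G.dist b c := by
  obtain ⟨p, hp⟩ := hab.exists_walk_length_eq_dist
  obtain ⟨q, hq⟩ := hbc.exists_walk_length_eq_dist
  have := G.dist_le (p.append q)
  rwa [SimpleGraph.Walk.length_append, hp, hq] at this

lemma myDistSupportLe {a b x : V} {p : G.Walk a b} (hx : x ∈ p.support) :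
    G.dist a x + G.dist x b ≤ p.length := by
  classical
  calc G.dist a x + G.dist x b ≤ (p.takeUntil x hx).length + (p.dropUntil x hx).length :=
        add_le_add (G.dist_le _) (G.dist_le _)
    _ = p.length := by rw [← SimpleGraph.Walk.length_append, p.take_spec hx]

lemma myNoEquidistant {k : ℕ} (hg : 2 * k ≤ G.girth) {i j l : V} (hij : G.Adj i j)
    (hl : G.Reachable i l) (hlt : G.dist i l < k) : G.dist i l ≠ G.dist j l := by
  intro heq
  have hjl : G.Reachable j l := (hij.reachable.symm).trans hl
  obtain ⟨p, hp, hplen⟩ := hl.exists_path_of_dist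
  obtain ⟨q0, hq0, hq0len⟩ := hjl.exists_path_of_dist
  have hins : i ∉ q0.support := by
    intro hi
    have h1 := myDistSupportLe hi
    have h2 : G.dist j i = 1 := SimpleGraph.dist_eq_one_iff_adj.mpr hij.symm
    omega
  have hq : (SimpleGraph.Walk.cons hij q0).IsPath := hq0.cons hins
  have := myShortPathsEq hg hp hq (by
    rw [SimpleGraph.Walk.length_cons, hplen, hq0len]; omega)
  have hll := congrArg SimpleGraph.Walk.length this
  rw [hplen, SimpleGraph.Walk.length_cons, hq0len] at hll
  omega

lemma myPred {i u : V} (hru : G.Reachable i u) {m : ℕ} (hd : G.dist i u = m + 1) :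
    ∃ w, G.Adj u w ∧ G.dist i w = m := by
  obtain ⟨p, hp, hplen⟩ := hru.exists_path_of_dist
  have hne : u ≠ i := by
    rintro rfl
    rw [G.dist_self] at hd; omega
  obtain ⟨x, hadj, r, hrw⟩ := SimpleGraph.Walk.exists_eq_cons_of_ne hne p.reverse
  have hrlen : r.length = m := by
    have := congrArg SimpleGraph.Walk.length hrw
    rw [SimpleGraph.Walk.length_reverse, hplen, SimpleGraph.Walk.length_cons] at this
    omega
  have hrx : G.Reachable i x := ⟨r.reverse⟩
  have h1 : G.dist i x ≤ m := by
    have := G.dist_le r.reverse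
    rwa [SimpleGraph.Walk.length_reverse, hrlen] at this
  have h2 : G.dist i u ≤ G.dist i x + 1 := by
    have := myDistTri hrx hadj.symm.reachable
    have h3 : G.dist x u ≤ 1 := by
      have := G.dist_le hadj.symm.toWalk
      simpa using this
    omega
  exact ⟨x, hadj, by omega⟩


open Classical in
noncomputable def mySphere [Fintype V] (G : SimpleGraph V) (i j : V) (ℓ : ℕ) : Finset V :=
  Finset.univ.filter (fun l => G.Reachable i l ∧ G.dist i l = ℓ ∧ G.dist j l = ℓ + 1)

lemma mem_mySphere [Fintype V] {i j l : V} {ℓ : ℕ} :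
    l ∈ mySphere G i j ℓ ↔ G.Reachable i l ∧ G.dist i l = ℓ ∧ G.dist j l = ℓ + 1 := by
  simp [mySphere]

lemma myDistAdj {a u w : V} (hadj : G.Adj u w) (h : G.Reachable a u) :
    G.dist a w ≤ G.dist a u + 1 := by
  have h2 : G.dist u w ≤ 1 := by simpa using G.dist_le hadj.toWalk
  have := myDistTri h hadj.reachable
  omega

lemma myConsRevPath {i w u : V} {p : G.Walk i w} (hp : p.IsPath) (hadj : G.Adj u w)
    (hns : u ∉ p.support) : (SimpleGraph.Walk.cons hadj p.reverse).IsPath := by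
  refine hp.reverse.cons ?_
  rwa [SimpleGraph.Walk.support_reverse, List.mem_reverse]

lemma myCardA [Fintype V] [DecidableEq V] [DecidableRel G.Adj] {k : ℕ}
    (hg : 2 * k ≤ G.girth) {i j : V} (hij : G.Adj i j) {m : ℕ} (hmk : m + 1 < k) :
    ∀ u ∈ mySphere G i j (m + 1), (G.neighborFinset u ∩ mySphere G i j m).card = 1 := by
  intro u hu
  obtain ⟨hreach, hdiu, hdju⟩ := mem_mySphere.mp hu
  obtain ⟨w, hadj, hdiw⟩ := myPred hreach hdiu
  have hriw : G.Reachable i w := hreach.trans hadj.reachable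
  have hdjw : G.dist j w = m + 1 := by
    have h1 : G.dist j w ≤ 1 + m := by
      have := myDistTri hij.symm.reachable hriw
      have h2 : G.dist j i = 1 := SimpleGraph.dist_eq_one_iff_adj.mpr hij.symm
      omega
    have h2 : G.dist j u ≤ G.dist j w + 1 :=
      myDistAdj hadj.symm ((hij.reachable.symm).trans hriw)
    omega
  have hmemw : w ∈ G.neighborFinset u ∩ mySphere G i j m := by
    rw [Finset.mem_inter, mem_neighborFinset, mem_mySphere]
    exact ⟨hadj, hriw, hdiw, hdjw⟩
  rw [Finset.card_eq_one]
  refine ⟨w, Finset.eq_singleton_iff_unique_mem.mpr ⟨hmemw, ?_⟩⟩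
  intro w' hw'
  rw [Finset.mem_inter, mem_neighborFinset, mem_mySphere] at hw'
  obtain ⟨hadj', hriw', hdiw', hdjw'⟩ := hw'
  by_contra hne
  obtain ⟨p, hp, hplen⟩ := hriw.exists_path_of_dist
  obtain ⟨p', hp', hplen'⟩ := hriw'.exists_path_of_dist
  have hns : u ∉ p.support := fun hs => by
    have := myDistSupportLe hs; rw [hplen, hdiw] at this; omega
  have hns' : u ∉ p'.support := fun hs => by
    have := myDistSupportLe hs; rw [hplen', hdiw'] at this; omega
  have hP := myConsRevPath hp hadj hns
  have hP' := myConsRevPath hp' hadj' hns'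
  have heq := myShortPathsEq hg hP hP' (by
    simp only [SimpleGraph.Walk.length_cons, SimpleGraph.Walk.length_reverse, hplen, hplen',
      hdiw, hdiw']
    omega)
  have h2 := congrArg (fun z => z.getVert 1) heq
  simp only [SimpleGraph.Walk.getVert_cons_succ, SimpleGraph.Walk.getVert_zero] at h2
  exact hne h2.symm

lemma myConcatPath {a b c : V} {p : G.Walk a b} (hp : p.IsPath) (h : G.Adj b c)
    (hc : c ∉ p.support) : (p.concat h).IsPath := by
  rw [← SimpleGraph.Walk.isPath_reverse_iff, SimpleGraph.Walk.reverse_concat]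
  exact hp.reverse.cons (by rwa [SimpleGraph.Walk.support_reverse, List.mem_reverse])

lemma myCardB [Fintype V] [DecidableEq V] [DecidableRel G.Adj] {d k : ℕ}
    (hreg : G.IsRegularOfDegree d) (hg : 2 * k ≤ G.girth) {i j : V} (hij : G.Adj i j)
    {ℓ : ℕ} (hℓk : ℓ + 2 < k) :
    ∀ w ∈ mySphere G i j ℓ, (G.neighborFinset w ∩ mySphere G i j (ℓ + 1)).card = d - 1 := by
  intro w hw
  obtain ⟨hreach, hdiw, hdjw⟩ := mem_mySphere.mp hw
  have key : ∃ u₀, G.Adj w u₀ ∧ u₀ ∉ mySphere G i j (ℓ + 1) ∧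
      ∀ u, G.Adj w u → u ≠ u₀ → u ∈ mySphere G i j (ℓ + 1) := by
    cases ℓ with
    | zero =>
      obtain rfl : i = w := hreach.dist_eq_zero_iff.mp hdiw
      refine ⟨j, hij, ?_, ?_⟩
      · rw [mem_mySphere]
        rintro ⟨-, -, h2⟩
        rw [G.dist_self] at h2; omega
      · intro u hadj hne
        have hru : G.Reachable i u := hadj.reachable
        have hdiu : G.dist i u = 1 := SimpleGraph.dist_eq_one_iff_adj.mpr hadj
        rw [mem_mySphere]
        refine ⟨hru, hdiu, ?_⟩
        have hrju : G.Reachable j u := (hij.reachable.symm).trans hru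
        have hb1 : G.dist j u ≤ 2 := by
          have := myDistTri hij.symm.reachable hru
          have h2 : G.dist j i = 1 := SimpleGraph.dist_eq_one_iff_adj.mpr hij.symm
          omega
        have hb2 : G.dist j u ≠ 0 := by
          intro h0
          exact hne (hrju.dist_eq_zero_iff.mp h0).symm
        have hb3 : G.dist j u ≠ 1 := by
          intro h1
          exact myNoEquidistant hg hij hru (by omega) (by omega)
        omega
    | succ m =>
      obtain ⟨u₀, hadj₀, hd₀⟩ := myPred hreach hdiw
      refine ⟨u₀, hadj₀, ?_, ?_⟩
      · rw [mem_mySphere]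
        rintro ⟨-, h1, -⟩
        omega
      · intro u hadj hne
        have hru : G.Reachable i u := hreach.trans hadj.reachable
        have hrju : G.Reachable j u := (hij.reachable.symm).trans hru
        -- bounds on dist i u
        have hb1 : G.dist i u ≤ m + 2 := by
          have := myDistAdj hadj hreach; omega
        have hb2 : m + 1 ≤ G.dist i u + 1 := by
          have := myDistAdj hadj.symm hru; omega
        -- dist i u ≠ m + 1
        have hne1 : G.dist i u ≠ m + 1 := by
          intro hdu
          obtain ⟨p, hp, hplen⟩ := hreach.exists_path_of_dist
          obtain ⟨q0, hq0, hq0len⟩ := hru.exists_path_of_dist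
          have hns : w ∉ q0.support := fun hs => by
            have h3 := myDistSupportLe hs
            have h4 : G.dist w u ≠ 0 := by
              rw [SimpleGraph.dist_ne_zero_iff_ne_and_reachable]
              exact ⟨hadj.ne, hadj.reachable⟩
            rw [hq0len, hdu, hdiw] at h3
            omega
          have hQ := myConsRevPath hq0 hadj hns
          have heq := myShortPathsEq hg hp.reverse hQ (by
            simp only [SimpleGraph.Walk.length_cons, SimpleGraph.Walk.length_reverse,
              hplen, hq0len, hdiw, hdu]
            omega)
          have hll := congrArg SimpleGraph.Walk.length heq
          simp only [SimpleGraph.Walk.length_cons, SimpleGraph.Walk.length_reverse,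
            hplen, hq0len, hdiw, hdu] at hll
          omega
        -- dist i u = m → u = u₀
        have hne2 : G.dist i u ≠ m := by
          intro hdu
          obtain ⟨g0, hg0, hg0len⟩ := (hreach.trans hadj₀.reachable).exists_path_of_dist
          obtain ⟨g1, hg1, hg1len⟩ := hru.exists_path_of_dist
          rw [hd₀] at hg0len
          rw [hdu] at hg1len
          have hns0 : w ∉ g0.support := fun hs => by
            have h3 := myDistSupportLe hs
            have h4 : G.dist w u₀ ≠ 0 := by
              rw [SimpleGraph.dist_ne_zero_iff_ne_and_reachable]
              exact ⟨hadj₀.ne, hadj₀.reachable⟩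
            rw [hg0len] at h3; omega
          have hns1 : w ∉ g1.support := fun hs => by
            have h3 := myDistSupportLe hs
            have h4 : G.dist w u ≠ 0 := by
              rw [SimpleGraph.dist_ne_zero_iff_ne_and_reachable]
              exact ⟨hadj.ne, hadj.reachable⟩
            rw [hg1len] at h3; omega
          have hP0 := myConsRevPath hg0 hadj₀ hns0
          have hP1 := myConsRevPath hg1 hadj hns1
          have heq := myShortPathsEq hg hP1 hP0 (by
            simp only [SimpleGraph.Walk.length_cons, SimpleGraph.Walk.length_reverse,
              hg0len, hg1len]
            omega)
          have h2 := congrArg (fun z => z.getVert 1) heq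
          simp only [SimpleGraph.Walk.getVert_cons_succ, SimpleGraph.Walk.getVert_zero] at h2
          exact hne h2
        have hdiu : G.dist i u = m + 2 := by omega
        -- now dist j u
        have hjb1 : G.dist j u ≤ m + 3 := by
          have := myDistAdj hadj ((hij.reachable.symm).trans hreach); omega
        have hjb2 : m + 1 ≤ G.dist j u := by
          have := myDistTri hij.reachable hrju
          have h2 : G.dist i j = 1 := SimpleGraph.dist_eq_one_iff_adj.mpr hij
          omega
        have hjne1 : G.dist j u ≠ m + 2 := by
          intro hdu
          exact myNoEquidistant hg hij hru (by omega) (by rw [hdiu, hdu])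
        have hjne2 : G.dist j u ≠ m + 1 := by
          intro hdju2
          obtain ⟨gj, hgj, hgjlen⟩ := hrju.exists_path_of_dist
          rw [hdju2] at hgjlen
          obtain ⟨p, hp, hplen⟩ := hreach.exists_path_of_dist
          rw [hdiw] at hplen
          -- W : Walk w j := p.reverse.concat hij
          have hjnp : j ∉ p.support := fun hs => by
            have h3 := myDistSupportLe hs
            have h4 : G.dist i j = 1 := SimpleGraph.dist_eq_one_iff_adj.mpr hij
            rw [hplen] at h3
            rw [SimpleGraph.dist_comm] at h3
            omega
          have hW : ((p.reverse).concat hij).IsPath := by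
            apply myConcatPath hp.reverse
            rwa [SimpleGraph.Walk.support_reverse, List.mem_reverse]
          have hunW : u ∉ ((p.reverse).concat hij).support := by
            rw [SimpleGraph.Walk.support_concat]
            intro hs
            rw [List.mem_append] at hs
            rcases hs with hs | hs
            · rw [SimpleGraph.Walk.support_reverse, List.mem_reverse] at hs
              have h3 := myDistSupportLe hs
              rw [hplen, hdiu] at h3; omega
            · rw [List.mem_singleton] at hs
              subst hs
              rw [G.dist_self] at hdju2; omega
          have hB : (SimpleGraph.Walk.cons hadj.symm ((p.reverse).concat hij)).IsPath :=
            hW.cons hunW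
          have heq := myShortPathsEq hg hgj.reverse hB (by
            simp only [SimpleGraph.Walk.length_cons, SimpleGraph.Walk.length_reverse,
              SimpleGraph.Walk.length_concat, hgjlen, hplen]
            omega)
          have hll := congrArg SimpleGraph.Walk.length heq
          simp only [SimpleGraph.Walk.length_cons, SimpleGraph.Walk.length_reverse,
            SimpleGraph.Walk.length_concat, hgjlen, hplen] at hll
          omega
        rw [mem_mySphere]
        exact ⟨hru, hdiu, by omega⟩
  obtain ⟨u₀, hadj₀, hns₀, hall⟩ := key
  have hset : G.neighborFinset w ∩ mySphere G i j (ℓ + 1) =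
      (G.neighborFinset w).erase u₀ := by
    ext u
    simp only [Finset.mem_inter, Finset.mem_erase, mem_neighborFinset]
    constructor
    · rintro ⟨h1, h2⟩
      exact ⟨fun h => hns₀ (h ▸ h2), h1⟩
    · rintro ⟨h1, h2⟩
      exact ⟨h2, hall u h2 h1⟩
  rw [hset, Finset.card_erase_of_mem (mem_neighborFinset _ _ _ |>.mpr hadj₀),
    G.card_neighborFinset_eq_degree, hreg w]

lemma mySphereCard [Fintype V] [DecidableEq V] [DecidableRel G.Adj] {d k : ℕ}
    (hreg : G.IsRegularOfDegree d) (hg : 2 * k ≤ G.girth) {i j : V} (hij : G.Adj i j) :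
    ∀ ℓ, ℓ + 1 < k → (mySphere G i j ℓ).card = (d - 1) ^ ℓ := by
  intro ℓ
  induction ℓ with
  | zero =>
    intro _
    have h1 : mySphere G i j 0 = {i} := by
      ext l
      rw [mem_mySphere, Finset.mem_singleton]
      constructor
      · rintro ⟨hr, h0, -⟩
        exact (hr.dist_eq_zero_iff.mp h0).symm
      · rintro rfl
        exact ⟨Reachable.refl _, SimpleGraph.dist_self,
          by rw [zero_add, SimpleGraph.dist_eq_one_iff_adj]; exact hij.symm⟩
    rw [h1, Finset.card_singleton, pow_zero]
  | succ ℓ ih =>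
    intro hk1
    have hA := myCardA hg hij (m := ℓ) (by omega)
    have hB := myCardB hreg hg hij (ℓ := ℓ) (by omega)
    have hinter : ∀ (u : V) (s : Finset V), G.neighborFinset u ∩ s =
        s.filter (fun w => G.Adj u w) := by
      intro u s
      ext w
      simp [mem_neighborFinset, and_comm]
    calc (mySphere G i j (ℓ + 1)).card
        = ∑ u ∈ mySphere G i j (ℓ + 1), (G.neighborFinset u ∩ mySphere G i j ℓ).card := by
          rw [Finset.card_eq_sum_ones]
          exact (Finset.sum_congr rfl hA).symm
      _ = ∑ u ∈ mySphere G i j (ℓ + 1), ∑ w ∈ mySphere G i j ℓ,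
            if G.Adj u w then 1 else 0 := by
          refine Finset.sum_congr rfl fun u _ => ?_
          rw [hinter, Finset.card_filter]
      _ = ∑ w ∈ mySphere G i j ℓ, ∑ u ∈ mySphere G i j (ℓ + 1),
            if G.Adj u w then 1 else 0 := Finset.sum_comm
      _ = ∑ w ∈ mySphere G i j ℓ, (d - 1) := by
          refine Finset.sum_congr rfl fun w hw => ?_
          have : ∑ u ∈ mySphere G i j (ℓ + 1), (if G.Adj u w then 1 else 0) =
              ∑ u ∈ mySphere G i j (ℓ + 1), (if G.Adj w u then 1 else 0) := by
            exact Finset.sum_congr rfl fun u _ => if_congr (G.adj_comm u w) rfl rfl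
          rw [this, ← Finset.card_filter, ← hinter]
          exact hB w hw
      _ = (d - 1) ^ ℓ * (d - 1) := by
          rw [Finset.sum_const, ih (by omega), smul_eq_mul, mul_comm]
      _ = (d - 1) ^ (ℓ + 1) := (pow_succ _ _).symm


end Aux

theorem inner_product_explicit_vector {V : Type*} [Fintype V] [DecidableEq V]
    (G : SimpleGraph V) [DecidableRel G.Adj] (d k : ℕ) (hd : 2 ≤ d) (hk : 2 ≤ k)
    (hreg : G.IsRegularOfDegree d) (hgirth : 2 * k ≤ G.girth)
    (α : ℕ → ℝ)
    (v : V → V → ℝ)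
    (hv : v = fun i j => if G.Reachable i j ∧ G.dist i j < k then α (G.dist i j) else 0)
    (i j : V) (hij : G.Adj i j) :
    ∑ l, v i l * v j l =
      ∑ ℓ ∈ Finset.range (k - 1), 2 * ((d : ℝ) - 1) ^ ℓ * α ℓ * α (ℓ + 1) := by
  subst hv
  set T : Finset V := (Finset.range (k - 1)).biUnion
    (fun ℓ => mySphere G i j ℓ ∪ mySphere G j i ℓ) with hT
  have hstep1 : ∑ l, (if G.Reachable i l ∧ G.dist i l < k then α (G.dist i l) else 0) *
      (if G.Reachable j l ∧ G.dist j l < k then α (G.dist j l) else 0) =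
      ∑ l ∈ T, (if G.Reachable i l ∧ G.dist i l < k then α (G.dist i l) else 0) *
      (if G.Reachable j l ∧ G.dist j l < k then α (G.dist j l) else 0) := by
    refine (Finset.sum_subset (Finset.subset_univ T) ?_).symm
    intro l _ hl
    by_cases h1 : G.Reachable i l ∧ G.dist i l < k
    · by_cases h2 : G.Reachable j l ∧ G.dist j l < k
      · exfalso
        obtain ⟨hr1, hlt1⟩ := h1
        obtain ⟨hr2, hlt2⟩ := h2
        have hneq : G.dist i l ≠ G.dist j l := myNoEquidistant hgirth hij hr1 hlt1
        have hb1 : G.dist j l ≤ G.dist i l + 1 := by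
          have := myDistTri hij.symm.reachable hr1
          have h2 : G.dist j i = 1 := SimpleGraph.dist_eq_one_iff_adj.mpr hij.symm
          omega
        have hb2 : G.dist i l ≤ G.dist j l + 1 := by
          have := myDistTri hij.reachable hr2
          have h2 : G.dist i j = 1 := SimpleGraph.dist_eq_one_iff_adj.mpr hij
          omega
        apply hl
        rw [hT, Finset.mem_biUnion]
        rcases (by omega : G.dist j l = G.dist i l + 1 ∨ G.dist i l = G.dist j l + 1) with h | h
        · exact ⟨G.dist i l, Finset.mem_range.mpr (by omega),
            Finset.mem_union_left _ (mem_mySphere.mpr ⟨hr1, rfl, h⟩)⟩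
        · exact ⟨G.dist j l, Finset.mem_range.mpr (by omega),
            Finset.mem_union_right _ (mem_mySphere.mpr ⟨hr2, rfl, h⟩)⟩
      · rw [if_neg h2, mul_zero]
    · rw [if_neg h1, zero_mul]
  rw [hstep1, hT]
  rw [Finset.sum_biUnion ?hdisj]
  case hdisj =>
    intro a ha b hb hab
    simp only [Finset.coe_range, Set.mem_Iio] at ha hb
    rw [Function.onFun, Finset.disjoint_left]
    intro l h1 h2
    rw [Finset.mem_union, mem_mySphere, mem_mySphere] at h1 h2
    rcases h1 with ⟨-, h11, h12⟩ | ⟨-, h11, h12⟩ <;>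
      rcases h2 with ⟨-, h21, h22⟩ | ⟨-, h21, h22⟩ <;> omega
  refine Finset.sum_congr rfl fun ℓ hℓ => ?_
  rw [Finset.mem_range] at hℓ
  have hℓk : ℓ + 1 < k := by omega
  have hdisj2 : Disjoint (mySphere G i j ℓ) (mySphere G j i ℓ) := by
    rw [Finset.disjoint_left]
    intro l h1 h2
    rw [mem_mySphere] at h1 h2
    omega
  rw [Finset.sum_union hdisj2]
  have hc1 : ∀ l ∈ mySphere G i j ℓ,
      (if G.Reachable i l ∧ G.dist i l < k then α (G.dist i l) else 0) *
      (if G.Reachable j l ∧ G.dist j l < k then α (G.dist j l) else 0) = α ℓ * α (ℓ + 1) := by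
    intro l h1
    rw [mem_mySphere] at h1
    obtain ⟨hr, hd1, hd2⟩ := h1
    rw [if_pos ⟨hr, by omega⟩, if_pos ⟨(hij.reachable.symm).trans hr, by omega⟩, hd1, hd2]
  have hc2 : ∀ l ∈ mySphere G j i ℓ,
      (if G.Reachable i l ∧ G.dist i l < k then α (G.dist i l) else 0) *
      (if G.Reachable j l ∧ G.dist j l < k then α (G.dist j l) else 0) = α (ℓ + 1) * α ℓ := by
    intro l h1
    rw [mem_mySphere] at h1
    obtain ⟨hr, hd1, hd2⟩ := h1
    rw [if_pos ⟨(hij.reachable).trans hr, by omega⟩, if_pos ⟨hr, by omega⟩, hd1, hd2]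
  rw [Finset.sum_congr rfl hc1, Finset.sum_congr rfl hc2, Finset.sum_const, Finset.sum_const,
    mySphereCard hreg hgirth hij ℓ hℓk, mySphereCard hreg hgirth hij.symm ℓ hℓk]
  have hcast : ((d - 1 : ℕ) : ℝ) = (d : ℝ) - 1 := by
    rw [Nat.cast_sub (by omega), Nat.cast_one]
  rw [nsmul_eq_mul, nsmul_eq_mul, Nat.cast_pow, hcast]
  ring
end

section
/- For every integer k ≥ 5 and every integer d ≥ 3, cos(π/(k+1)) > (k-1)/(k - 1/d). -/
open Real

theorem cos_gt_lyons (k d : ℕ) (hk : 5 ≤ k) (hd : 3 ≤ d) :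
    Real.cos (π / (k + 1)) > ((k : ℝ) - 1) / ((k : ℝ) - 1 / d) := by
  have hk' : (5:ℝ) ≤ (k:ℝ) := by exact_mod_cast hk
  have hd' : (3:ℝ) ≤ (d:ℝ) := by exact_mod_cast hd
  have hdpos : (0:ℝ) < (d:ℝ) := by linarith
  have hu1 : (0:ℝ) < 1/(d:ℝ) := by positivity
  have hu2 : 1/(d:ℝ) ≤ 1/3 := by
    rw [div_le_div_iff₀ hdpos (by norm_num)]; linarith
  have hden : (0:ℝ) < (k:ℝ) - 1/(d:ℝ) := by linarith
  have hK1 : (0:ℝ) < (k:ℝ) + 1 := by linarith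
  have hpi : π < 3.15 := Real.pi_lt_d2
  have hpi0 : 0 < π := Real.pi_pos
  have hpisq : π^2 < 10 := by nlinarith
  have hcos : 1 - (π / ((k:ℝ)+1))^2 / 2 ≤ Real.cos (π / ((k:ℝ)+1)) :=
    Real.one_sub_sq_div_two_le_cos
  have hexp : (π / ((k:ℝ)+1))^2 / 2 = π^2 / (2 * ((k:ℝ)+1)^2) := by
    field_simp
  have hSpos : (0:ℝ) < 2 * ((k:ℝ)+1)^2 := by positivity
  have hpoly : π^2 * ((k:ℝ) - 1/(d:ℝ)) < 2 * ((k:ℝ)+1)^2 * (1 - 1/(d:ℝ)) := by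
    nlinarith [mul_nonneg (by linarith : (0:ℝ) ≤ 1/3 - 1/(d:ℝ))
      (by nlinarith : (0:ℝ) ≤ 2 * ((k:ℝ)+1)^2 - 10),
      mul_pos hpi0 hpi0, sq_nonneg ((k:ℝ) - 5)]
  have hineq : ((k:ℝ) - 1) / ((k:ℝ) - 1/(d:ℝ)) < 1 - (π / ((k:ℝ)+1))^2 / 2 := by
    rw [div_lt_iff₀ hden, hexp, sub_mul, one_mul, lt_sub_iff_add_lt,
      div_mul_eq_mul_div]
    have h2 : π ^ 2 * ((k:ℝ) - 1 / (d:ℝ)) / (2 * ((k:ℝ) + 1) ^ 2)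
        < 1 - 1 / (d:ℝ) := by
      rw [div_lt_iff₀ hSpos]
      nlinarith [hpoly]
    linarith
  calc ((k:ℝ) - 1) / ((k:ℝ) - 1/(d:ℝ)) < 1 - (π / ((k:ℝ)+1))^2 / 2 := hineq
    _ ≤ Real.cos (π / ((k:ℝ)+1)) := hcos
end

section
/- For k = 3 and every integer d with 3 ≤ d, we have cos(π/4) + (√(d/(d-1)) - 1)·(1/2)·sin(π/4)·sin(π/2) > (3-1)/(3 - 1/d), i.e., the explicit-vector relative expectation bound (√2/2)(1 + (√(d/(d-1))-1)/2) exceeds 2/(3 - 1/d). -/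
/-!
With `s = √(d/(d-1))`, the left-hand side is `(√2/2) (1 + (s - 1)/2)`. Squaring shows
`s ≥ 1 + 1/(2d)`, so the left-hand side is at least `(√2/2) (1 + 1/(4d))`. Clearing denominators,
this exceeds `2/(3 - 1/d)` exactly when `√2 (12d² - d - 1) > 16d²`, which already holds with
`√2` replaced by `7/5` once `d ≥ 3`.
-/

open Real

lemma one_add_one_div_two_mul_le_sqrt_div_sub_one {x : ℝ} (hx : 1 < x) :
    1 + 1 / (2 * x) ≤ √(x / (x - 1)) := by
  have hx0 : 0 < x := by linarith
  have hx1 : 0 < x - 1 := by linarith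
  rw [le_sqrt (by positivity) (by positivity), one_add_div (by positivity),
    div_pow, div_le_div_iff₀ (by positivity) hx1]
  nlinarith

lemma seven_fifths_lt_sqrt_two : (7 / 5 : ℝ) < √2 := by
  rw [lt_sqrt (by norm_num)]
  norm_num

lemma two_div_three_sub_one_div_lt {x : ℝ} (hx : 3 ≤ x) :
    2 / (3 - 1 / x) < √2 / 2 * (1 + 1 / (4 * x)) := by
  have hx0 : 0 < x := by linarith
  have hden : 3 - 1 / x = (3 * x - 1) / x := by field_simp
  have hrhs : √2 / 2 * (1 + 1 / (4 * x)) = √2 * (4 * x + 1) / (8 * x) := by field_simp; ring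
  rw [hden, hrhs, div_div_eq_mul_div, div_lt_div_iff₀ (by linarith) (by positivity)]
  have hquad : 0 < 12 * x ^ 2 - x - 1 := by nlinarith
  nlinarith [mul_lt_mul_of_pos_right seven_fifths_lt_sqrt_two hquad]

theorem explicit_vector_gt_lyons_k3 (d : ℕ) (hd : 3 ≤ d) :
    Real.cos (π / 4) +
        (Real.sqrt ((d : ℝ) / ((d : ℝ) - 1)) - 1) * (1 / 2) * Real.sin (π / 4) * Real.sin (π / 2)
      > (3 - 1) / (3 - 1 / (d : ℝ)) := by
  have hd' : (3 : ℝ) ≤ d := by exact_mod_cast hd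
  have hsqrt := one_add_one_div_two_mul_le_sqrt_div_sub_one (by linarith : (1 : ℝ) < d)
  rw [cos_pi_div_four, sin_pi_div_four, sin_pi_div_two, gt_iff_lt]
  calc (3 - 1) / (3 - 1 / (d : ℝ)) = 2 / (3 - 1 / (d : ℝ)) := by norm_num
    _ < √2 / 2 * (1 + 1 / (4 * d)) := two_div_three_sub_one_div_lt hd'
    _ = √2 / 2 + 1 / (2 * d) * (1 / 2) * (√2 / 2) := by field_simp; ring
    _ ≤ √2 / 2 + (√(d / (d - 1)) - 1) * (1 / 2) * (√2 / 2) * 1 := by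
      rw [mul_one]
      gcongr
      linarith
end

section
/- On a d-regular triangle-free graph G = (V,E) with n = |V|, the vectors v_i ∈ ℝ^n defined by (v_i)_i = 1/√2, (v_i)_j = -1/√(2d) for (i,j) ∈ E, and 0 otherwise, are unit vectors, and v_i · v_j = -1/√d for every edge (i,j) ∈ E. -/
open Real

theorem triangle_free_explicit_vectors {V : Type*} [Fintype V] [DecidableEq V]
    (G : SimpleGraph V) [DecidableRel G.Adj] (d : ℕ) (hd : 1 ≤ d)
    (hreg : G.IsRegularOfDegree d) (htri : G.CliqueFree 3)
    (v : V → V → ℝ)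
    (hv : v = fun i j =>
      if i = j then 1 / Real.sqrt 2
      else if G.Adj i j then -1 / Real.sqrt (2 * d) else 0) :
    (∀ i, ∑ j, (v i j) ^ 2 = 1) ∧
      ∀ i j, G.Adj i j → ∑ l, v i l * v j l = -1 / Real.sqrt d := by
  have hd0 : (0:ℝ) < d := by exact_mod_cast hd
  subst hv
  simp only
  have h2d : Real.sqrt (2 * d) ^ 2 = 2 * d := Real.sq_sqrt (by positivity)
  have h2 : Real.sqrt 2 ^ 2 = 2 := Real.sq_sqrt (by norm_num)
  constructor
  · intro i
    have hsum : ∀ j, ((if i = j then 1 / Real.sqrt 2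
        else if G.Adj i j then -1 / Real.sqrt (2 * (d:ℝ)) else 0) ^ 2)
        = (if j = i then (1:ℝ)/2 else 0)
          + (if j ∈ G.neighborFinset i then 1/(2*(d:ℝ)) else 0) := by
      intro j
      by_cases h1 : i = j
      · subst h1
        rw [if_pos rfl, if_pos rfl,
          if_neg (by simp [SimpleGraph.mem_neighborFinset])]
        rw [div_pow, one_pow, h2]; norm_num
      · rw [if_neg h1, if_neg (Ne.symm h1)]
        by_cases hadj : G.Adj i j
        · rw [if_pos hadj, if_pos (by simpa [SimpleGraph.mem_neighborFinset] using hadj)]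
          rw [div_pow, neg_one_sq, h2d]; ring
        · rw [if_neg hadj, if_neg (by simpa [SimpleGraph.mem_neighborFinset] using hadj)]
          norm_num
    rw [Finset.sum_congr rfl (fun j _ => hsum j), Finset.sum_add_distrib,
      Finset.sum_ite_eq' Finset.univ i (fun _ => (1:ℝ)/2), if_pos (Finset.mem_univ i),
      Finset.sum_ite_mem, Finset.univ_inter, Finset.sum_const,
      SimpleGraph.card_neighborFinset_eq_degree, hreg i, nsmul_eq_mul]
    field_simp
    ring
  · intro i j hij
    have hne : i ≠ j := G.ne_of_adj hij
    set c : ℝ := (1 / Real.sqrt 2) * (-1 / Real.sqrt (2 * d)) with hc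
    have hterm : ∀ l, ((if i = l then 1 / Real.sqrt 2
        else if G.Adj i l then -1 / Real.sqrt (2 * (d:ℝ)) else 0)
        * (if j = l then 1 / Real.sqrt 2
        else if G.Adj j l then -1 / Real.sqrt (2 * (d:ℝ)) else 0))
        = (if l = i then c else 0) + (if l = j then c else 0) := by
      intro l
      by_cases h1 : l = i
      · subst h1
        have h1' : ¬ j = l := Ne.symm hne
        simp [h1', hne, hij.symm, hc]
      · by_cases h2' : l = j
        · subst h2'
          have h1' : ¬ i = l := fun h => hne h
          simp [h1', hij, h1, hc]
          ring
        · simp only [if_neg (fun h : i = l => h1 h.symm),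
            if_neg (fun h : j = l => h2' h.symm), if_neg h1, if_neg h2', add_zero]
          by_cases hil : G.Adj i l
          · have hjl : ¬ G.Adj j l := by
              intro hjl
              exact htri {i, j, l} (SimpleGraph.is3Clique_triple_iff.mpr ⟨hij, hil, hjl⟩)
            simp [hil, hjl]
          · simp [hil]
    rw [Finset.sum_congr rfl (fun l _ => hterm l), Finset.sum_add_distrib,
      Finset.sum_ite_eq' Finset.univ i (fun _ => c), if_pos (Finset.mem_univ i),
      Finset.sum_ite_eq' Finset.univ j (fun _ => c), if_pos (Finset.mem_univ j)]
    have hmul : Real.sqrt 2 * Real.sqrt (2 * d) = 2 * Real.sqrt d := by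
      rw [← Real.sqrt_mul (by norm_num), show (2:ℝ) * (2 * d) = 4 * d by ring,
        Real.sqrt_mul (by norm_num), show Real.sqrt 4 = 2 by
          rw [show (4:ℝ) = 2^2 by norm_num, Real.sqrt_sq (by norm_num)]]
    have hsd : (0:ℝ) < Real.sqrt d := Real.sqrt_pos.mpr hd0
    rw [hc]
    rw [div_mul_div_comm, hmul]
    field_simp
    ring
end
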